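/- For every natural number n and every integer c ≥ 1, the complex conjugate of X(n,c) equals (-i)ⁿ·X(n,c); equivalently, X(n,c)·e^(-πin/4) is a real number (which is moreover algebraic, being a finite sum of roots of unity). -/

import Mathlib

open Matrix Complex

/-- `SL(2,ℤ)`, the group of 2×2 integer matrices of determinant 1. -/
abbrev SL2Z := Matrix.SpecialLinearGroup (Fin 2) ℤ

/-- The subgroup `G₁` of `SL(2,ℤ)`. -/
def G1 : Subgroup SL2Z :=
  Subgroup.closure
    { (⟨!![1, 4; 0, 1], by norm_num [Matrix.det_fin_two_of]⟩ : SL2Z),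
      ⟨!![3, -5; 2, -3], by norm_num [Matrix.det_fin_two_of]⟩,
      ⟨!![0, -1; 1, 1], by norm_num [Matrix.det_fin_two_of]⟩ }

/-- `χ(c,d)` holds iff some element of `G₁` has bottom row `(c,d)`. -/
def chi (c d : ℤ) : Prop :=
  ∃ (a b : ℤ) (h : a * d - b * c = 1),
    (⟨!![a, b; c, d], by rw [Matrix.det_fin_two_of]; linarith⟩ : SL2Z) ∈ G1

open scoped Classical in
/-- The exponential sum `X(n,c) = Σ_{d=1}^{4c} χ(c,d)·e^{2πind/(4c)}`. -/
noncomputable def X (n : ℕ) (c : ℤ) : ℂ :=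
  ∑ d ∈ Finset.Icc (1 : ℤ) (4 * c),
    if chi c d then Complex.exp (2 * Real.pi * Complex.I * n * d / (4 * c)) else 0

/-!
Conjugation by `F = [[1,1],[0,-1]]` (determinant `-1`) maps each generator of `G₁` into `G₁`,
and `A = [[3,-5],[2,-3]]` satisfies `A² = -I`. Hence `M ↦ A²·F·M·F` sends an element of `G₁` with
bottom row `(c, d)` to one with bottom row `(c, c - d)`, while right multiplication by powers of
`T⁴` shifts `d` by multiples of `4c`. So `χ(c, ·)` is `4c`-periodic and invariant under
`d ↦ c - d`, and reindexing `conj X(n,c) = Σ χ(c,d) e^{-2πind/(4c)}` by `d ↦ c - d` pulls out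
the factor `e^{2πinc/(4c)} = iⁿ`. Then `X(n,c)·e^{-πin/4}` is fixed by conjugation, and it is
algebraic as a sum of products of roots of unity.
-/

open ModularGroup Real
open scoped ComplexConjugate

theorem Function.Periodic.sum_Icc_one_comp_sub {M : Type*} [AddCommMonoid M] {g : ℤ → M} {m : ℤ}
    (hg : Function.Periodic g m) (hm : 0 < m) (c : ℤ) :
    ∑ d ∈ Finset.Icc 1 m, g (c - d) = ∑ d ∈ Finset.Icc 1 m, g d := by
  set r : ℤ → ℤ := fun d => toIocMod hm 0 (c - d)
  have hr_mem : ∀ d, r d ∈ Finset.Icc 1 m := fun d => by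
    have hIoc := toIocMod_mem_Ioc hm 0 (c - d)
    rw [Set.mem_Ioc, zero_add] at hIoc
    rw [Finset.mem_Icc]; simp only [r]; omega
  have hr_eq : ∀ d, ∃ k : ℤ, r d = c - d - k • m := fun d =>
    ⟨toIocDiv hm 0 (c - d), by rw [← self_sub_toIocMod hm 0 (c - d), sub_sub_cancel]⟩
  have hr_invol : ∀ d ∈ Finset.Icc 1 m, r (r d) = d := fun d hd => by
    obtain ⟨k, hk⟩ := hr_eq d
    rw [Finset.mem_Icc] at hd
    simp only [r] at hk ⊢
    rw [hk, show c - (c - d - k • m) = d + k • m by abel, toIocMod_add_zsmul,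
      toIocMod_eq_self, Set.mem_Ioc]
    omega
  have hg_r : ∀ d, g (r d) = g (c - d) := fun d => by
    obtain ⟨k, hk⟩ := hr_eq d
    rw [hk, hg.sub_zsmul_eq]
  calc ∑ d ∈ Finset.Icc 1 m, g (c - d) = ∑ d ∈ Finset.Icc 1 m, g (r d) := by simp only [hg_r]
    _ = ∑ d ∈ Finset.Icc 1 m, g d :=
      Finset.sum_nbij' r r (fun d _ => hr_mem d) (fun d _ => hr_mem d) hr_invol hr_invol
        (fun _ _ => rfl)

lemma isIntegral_exp_two_pi_I_mul_div {R : Type*} [CommRing R] [Algebra R ℂ] (k : ℤ) {m : ℤ}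
    (hm : 0 < m) : IsIntegral R (exp (2 * π * I * k / m)) := by
  refine IsIntegral.of_pow (n := m.toNat) (by omega) ?_
  have hm' : ((m.toNat : ℕ) : ℂ) = m := by exact_mod_cast Int.toNat_of_nonneg hm.le
  rw [← Complex.exp_nat_mul, hm', mul_div_cancel₀ _ (by exact_mod_cast hm.ne'),
    show 2 * π * I * k = k * (2 * π * I) by ring, Complex.exp_int_mul_two_pi_mul_I]
  exact isIntegral_one

lemma conj_mul_exp_eq_self {w : ℂ} {n : ℕ} (hw : conj w = (-I) ^ n * w) :
    conj (w * exp (-(π * I * n) / 4)) = w * exp (-(π * I * n) / 4) := by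
  have hconj : conj (-(π * I * n) / 4) = π * I * n / 4 := by
    simp only [map_div₀, map_neg, map_mul, Complex.conj_ofReal, Complex.conj_I, map_natCast,
      map_ofNat]
    ring
  have hneg_I : (-I) ^ n = exp (-(π * I * n) / 2) := by
    rw [← Complex.exp_neg_pi_div_two_mul_I, ← Complex.exp_nat_mul]; ring_nf
  rw [map_mul, hw, ← Complex.exp_conj, hconj, hneg_I, mul_right_comm, ← Complex.exp_add, mul_comm]
  ring_nf

namespace G1

def T4 : SL2Z := ⟨!![1, 4; 0, 1], by norm_num [Matrix.det_fin_two_of]⟩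
def A : SL2Z := ⟨!![3, -5; 2, -3], by norm_num [Matrix.det_fin_two_of]⟩
def R : SL2Z := ⟨!![0, -1; 1, 1], by norm_num [Matrix.det_fin_two_of]⟩

lemma T4_mem : T4 ∈ G1 := Subgroup.subset_closure (Set.mem_insert _ _)
lemma A_mem : A ∈ G1 := Subgroup.subset_closure (Set.mem_insert_of_mem _ (Set.mem_insert _ _))
lemma R_mem : R ∈ G1 :=
  Subgroup.subset_closure (Set.mem_insert_of_mem _ (Set.mem_insert_of_mem _ rfl))

lemma T4_eq : T4 = T ^ 4 := by ext i j; fin_cases i <;> fin_cases j <;> decide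

lemma coe_T4_zpow (k : ℤ) : (T4 ^ k : SL2Z) = !![1, 4 * k; 0, 1] := by
  rw [T4_eq, ← zpow_natCast, ← _root_.zpow_mul, coe_T_zpow]; rfl

lemma A_mul_A : A * A = -1 := by decide

end G1

def reflMat : Matrix (Fin 2) (Fin 2) ℤ := !![1, 1; 0, -1]

lemma reflMat_mul_self : reflMat * reflMat = 1 := by decide

def reflConj : SL2Z →* SL2Z where
  toFun M := ⟨reflMat * M * reflMat, by
    rw [Matrix.det_mul, Matrix.det_mul, M.det_coe]; simp [reflMat, Matrix.det_fin_two_of]⟩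
  map_one' := Subtype.ext (by simp [reflMat_mul_self])
  map_mul' M N := Subtype.ext <| by
    change reflMat * ((M : Matrix (Fin 2) (Fin 2) ℤ) * N) * reflMat =
      reflMat * M * reflMat * (reflMat * N * reflMat)
    simp only [Matrix.mul_assoc]
    rw [← Matrix.mul_assoc reflMat reflMat, reflMat_mul_self, Matrix.one_mul]

lemma coe_reflConj (M : SL2Z) :
    (reflConj M : Matrix (Fin 2) (Fin 2) ℤ) = reflMat * M * reflMat := rfl

lemma reflConj_apply_one_zero (M : SL2Z) : reflConj M 1 0 = -M 1 0 := by
  simp [coe_reflConj, reflMat, Matrix.mul_apply, Matrix.vecMul, dotProduct, Fin.sum_univ_two]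

lemma reflConj_apply_one_one (M : SL2Z) : reflConj M 1 1 = M 1 1 - M 1 0 := by
  simp [coe_reflConj, reflMat, Matrix.mul_apply, Matrix.vecMul, dotProduct, Fin.sum_univ_two,
    sub_eq_add_neg]

namespace G1

lemma reflConj_T4 : reflConj T4 = T4⁻¹ := by decide
lemma reflConj_A : reflConj A = T4⁻¹ * A⁻¹ * T4 := by decide
lemma reflConj_R : reflConj R = A * A * (R * R) := by decide

lemma reflConj_mem {M : SL2Z} (hM : M ∈ G1) : reflConj M ∈ G1 := by
  suffices G1 ≤ G1.comap reflConj from this hM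
  refine (Subgroup.closure_le _).2 ?_
  rintro _ (rfl | rfl | rfl)
  · show reflConj T4 ∈ G1
    rw [reflConj_T4]; exact inv_mem T4_mem
  · show reflConj A ∈ G1
    rw [reflConj_A]; exact mul_mem (mul_mem (inv_mem T4_mem) (inv_mem A_mem)) T4_mem
  · show reflConj R ∈ G1
    rw [reflConj_R]; exact mul_mem (mul_mem A_mem A_mem) (mul_mem R_mem R_mem)

end G1

lemma chi_iff_exists_mem {c d : ℤ} : chi c d ↔ ∃ M ∈ G1, M 1 0 = c ∧ M 1 1 = d := by
  constructor
  · rintro ⟨a, b, _, hM⟩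
    exact ⟨_, hM, rfl, rfl⟩
  · rintro ⟨M, hM, rfl, rfl⟩
    have hdet : M 0 0 * M 1 1 - M 0 1 * M 1 0 = 1 := by rw [← Matrix.det_fin_two]; exact M.det_coe
    have hM_eta : M = ⟨!![M 0 0, M 0 1; M 1 0, M 1 1], by rwa [Matrix.det_fin_two_of]⟩ :=
      Subtype.ext (Matrix.eta_fin_two _)
    exact ⟨M 0 0, M 0 1, hdet, hM_eta ▸ hM⟩

lemma chi_add_mul {c d : ℤ} (k : ℤ) (h : chi c d) : chi c (d + 4 * c * k) := by
  obtain ⟨M, hM, rfl, rfl⟩ := chi_iff_exists_mem.1 h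
  have hcoe : ((M * G1.T4 ^ k : SL2Z) : Matrix (Fin 2) (Fin 2) ℤ) = M * !![1, 4 * k; 0, 1] := by
    rw [Matrix.SpecialLinearGroup.coe_mul, G1.coe_T4_zpow]
  refine chi_iff_exists_mem.2 ⟨M * G1.T4 ^ k, mul_mem hM (zpow_mem G1.T4_mem k), ?_, ?_⟩ <;>
    simp only [hcoe, Matrix.mul_apply, Fin.sum_univ_two, Matrix.of_apply, Matrix.cons_val',
      Matrix.cons_val_zero, Matrix.cons_val_one, Matrix.cons_val_fin_one] <;>
    ring

lemma chi_add_four_mul_iff {c d : ℤ} : chi c (d + 4 * c) ↔ chi c d :=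
  ⟨fun h => by simpa using chi_add_mul (-1) h, fun h => by simpa using chi_add_mul 1 h⟩

lemma chi_sub {c d : ℤ} (h : chi c d) : chi c (c - d) := by
  obtain ⟨M, hM, rfl, rfl⟩ := chi_iff_exists_mem.1 h
  refine chi_iff_exists_mem.2 ⟨G1.A * G1.A * reflConj M,
    mul_mem (mul_mem G1.A_mem G1.A_mem) (G1.reflConj_mem hM), ?_, ?_⟩ <;>
    simp [G1.A_mul_A, reflConj_apply_one_zero, reflConj_apply_one_one]

lemma chi_sub_iff {c d : ℤ} : chi c (c - d) ↔ chi c d :=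
  ⟨fun h => by simpa using chi_sub h, chi_sub⟩

open scoped Classical in
noncomputable def Xterm (n : ℕ) (c d : ℤ) : ℂ :=
  if chi c d then exp (2 * π * I * n * d / (4 * c)) else 0

lemma X_eq_sum_Xterm (n : ℕ) (c : ℤ) : X n c = ∑ d ∈ Finset.Icc 1 (4 * c), Xterm n c d := rfl

lemma Xterm_periodic (n : ℕ) {c : ℤ} (hc : c ≠ 0) : Function.Periodic (Xterm n c) (4 * c) := by
  intro d
  have hexp : exp (2 * π * I * n * ↑(d + 4 * c) / (4 * c)) = exp (2 * π * I * n * d / (4 * c)) := by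
    rw [show 2 * π * I * n * ↑(d + 4 * c) / (4 * c) = 2 * π * I * n * d / (4 * c) + n * (2 * π * I)
      by push_cast; field_simp, Complex.exp_add, Complex.exp_nat_mul_two_pi_mul_I, mul_one]
  by_cases h : chi c d
  · simp only [Xterm, if_pos h, if_pos (chi_add_four_mul_iff.2 h), hexp]
  · simp only [Xterm, if_neg h, if_neg (mt chi_add_four_mul_iff.1 h)]

lemma conj_Xterm (n : ℕ) {c : ℤ} (hc : c ≠ 0) (d : ℤ) :
    conj (Xterm n c d) = (-I) ^ n * Xterm n c (c - d) := by
  have hexp : (-I) ^ n * exp (2 * π * I * n * ↑(c - d) / (4 * c)) =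
      exp (-(2 * π * I * n * d / (4 * c))) := by
    rw [show 2 * π * I * n * ↑(c - d) / (4 * c) = n * (π / 2 * I) - 2 * π * I * n * d / (4 * c)
      by push_cast; field_simp; ring, Complex.exp_sub, Complex.exp_nat_mul,
      Complex.exp_pi_div_two_mul_I, mul_div_assoc', ← mul_pow, neg_mul, Complex.I_mul_I, neg_neg,
      one_pow, one_div, Complex.exp_neg]
  have hconj : conj (2 * π * I * n * d / (4 * c)) = -(2 * π * I * n * d / (4 * c)) := by
    simp only [map_div₀, map_mul, Complex.conj_ofReal, Complex.conj_I, map_natCast, map_intCast,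
      map_ofNat]
    ring
  by_cases h : chi c d
  · simp only [Xterm, if_pos h, if_pos (chi_sub h), ← Complex.exp_conj, hconj, hexp]
  · simp only [Xterm, if_neg h, if_neg (mt chi_sub_iff.1 h), map_zero, mul_zero]

lemma conj_X (n : ℕ) {c : ℤ} (hc : 0 < c) : conj (X n c) = (-I) ^ n * X n c := by
  rw [X_eq_sum_Xterm, map_sum]
  simp only [conj_Xterm n hc.ne']
  rw [← Finset.mul_sum, (Xterm_periodic n hc.ne').sum_Icc_one_comp_sub (by omega) c]

lemma isIntegral_X {R : Type*} [CommRing R] [Algebra R ℂ] (n : ℕ) {c : ℤ} (hc : 0 < c) :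
    IsIntegral R (X n c) := by
  rw [X_eq_sum_Xterm]
  refine IsIntegral.sum _ fun d _ => ?_
  unfold Xterm
  split_ifs
  · rw [show 2 * π * I * n * d / (4 * c) = 2 * π * I * ((n * d : ℤ) : ℂ) / ((4 * c : ℤ) : ℂ) by
      push_cast; ring]
    exact isIntegral_exp_two_pi_I_mul_div _ (by omega)
  · exact isIntegral_zero

/-- For every `n ≥ 0` and `c ≥ 1`, one has `conj X(n,c) = (-i)ⁿ·X(n,c)`; equivalently,
`X(n,c)·e^{-πin/4}` is a real (and algebraic) number. -/
theorem X_phase (n : ℕ) (c : ℤ) (hc : 1 ≤ c) :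
    (starRingEnd ℂ) (X n c) = (-Complex.I) ^ n * X n c ∧
      ∃ r : ℝ, X n c * Complex.exp (-(Real.pi * Complex.I * n) / 4) = (r : ℂ) ∧
        IsAlgebraic ℚ ((r : ℝ) : ℂ) := by
  have hconj := conj_X n (c := c) (by omega)
  obtain ⟨r, hr⟩ := Complex.conj_eq_iff_real.1 (conj_mul_exp_eq_self hconj)
  refine ⟨hconj, r, hr, ?_⟩
  have hexp : IsIntegral ℚ (exp (-(π * I * n) / 4)) := by
    rw [show -(π * I * n) / 4 = 2 * π * I * ((-n : ℤ) : ℂ) / ((8 : ℤ) : ℂ) by push_cast; ring]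
    exact isIntegral_exp_two_pi_I_mul_div _ (by norm_num)
  exact hr ▸ ((isIntegral_X n (by omega)).mul hexp).isAlgebraic
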